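/- arXiv:2203.06794 — 2 statements merged into one kernel-verified Lean document; each statement's English description precedes it below -/
import Mathlib

section
/- Let (Ω, M) be a Borel probability measure space, let (H, dh) be a measure space with σ-finite measure (thought of as a parameter space of 'times'), and let (a, ω) ↦ 1_{P_a}(ω) be a jointly measurable {0,1}-valued function. Suppose that ∫_H M(P_a) da = ∞ and that liminf over a filtration of sets H_T exhausting H of (∫_{H_T}∫_{H_T} M(P_a ∩ P_b) db da) / (∫_{H_T} M(P_a) da)² ≤ C for some finite constant C > 0. Then M({ω : ∫_H 1_{P_a}(ω) da = ∞}) ≥ 1/C. -/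
open MeasureTheory Filter Topology
open scoped ENNReal

/-- Paley–Zygmund-type second-moment inequality in `ℝ≥0∞`. -/
private lemma aux_PZ {Ω : Type*} [MeasurableSpace Ω] (M : Measure Ω) [IsProbabilityMeasure M]
    (S : Ω → ℝ≥0∞) (hS : Measurable S) (c : ℝ≥0∞) :
    (∫⁻ ω, S ω ∂M - c) ^ 2 ≤ (∫⁻ ω, (S ω) ^ 2 ∂M) * M {ω | c < S ω} := by
  set t : Set Ω := {ω | c < S ω} with ht_def
  have htm : MeasurableSet t := measurableSet_lt measurable_const hS
  set g : Ω → ℝ≥0∞ := t.indicator (fun _ => 1) with hg_def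
  have hgm : Measurable g := measurable_const.indicator htm
  have hpt : ∀ ω, S ω ≤ c + S ω * g ω := by
    intro ω
    by_cases h : c < S ω
    · have : g ω = 1 := Set.indicator_of_mem (show ω ∈ t from h) fun _ => (1:ℝ≥0∞)
      rw [this, mul_one]; exact le_add_self
    · exact le_add_right (not_lt.1 h)
  have h1 : ∫⁻ ω, S ω ∂M ≤ c + ∫⁻ ω, S ω * g ω ∂M := by
    calc ∫⁻ ω, S ω ∂M ≤ ∫⁻ ω, (c + S ω * g ω) ∂M := lintegral_mono hpt
      _ = c + ∫⁻ ω, S ω * g ω ∂M := by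
          rw [lintegral_add_left measurable_const, lintegral_const, measure_univ, mul_one]
  have hCS : ∫⁻ ω, S ω * g ω ∂M ≤
      (∫⁻ ω, (S ω) ^ 2 ∂M) ^ ((1:ℝ)/2) * (M t) ^ ((1:ℝ)/2) := by
    have hconj : Real.HolderConjugate 2 2 := Real.HolderConjugate.two_two
    have := ENNReal.lintegral_mul_le_Lp_mul_Lq M hconj hS.aemeasurable hgm.aemeasurable
    refine le_trans (le_of_eq ?_) (this.trans (le_of_eq ?_))
    · rfl
    · congr 1
      · congr 1
        refine lintegral_congr fun ω => ?_
        rw [← ENNReal.rpow_natCast (S ω) 2]; norm_num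
      · congr 1
        have : ∀ ω, g ω ^ (2:ℝ) = g ω := by
          intro ω
          by_cases h : ω ∈ t <;> simp [hg_def, Set.indicator_apply, h]
        simp_rw [this]
        rw [hg_def, lintegral_indicator htm, setLIntegral_one]
  have h2 : ∫⁻ ω, S ω ∂M - c ≤
      (∫⁻ ω, (S ω) ^ 2 ∂M) ^ ((1:ℝ)/2) * (M t) ^ ((1:ℝ)/2) :=
    tsub_le_iff_left.2 (h1.trans (add_le_add (le_refl c) hCS))
  calc (∫⁻ ω, S ω ∂M - c) ^ 2
      ≤ ((∫⁻ ω, (S ω) ^ 2 ∂M) ^ ((1:ℝ)/2) * (M t) ^ ((1:ℝ)/2)) ^ 2 := pow_le_pow_left' h2 2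
    _ = (∫⁻ ω, (S ω) ^ 2 ∂M) * M t := by
        rw [mul_pow, ← ENNReal.rpow_natCast (_ ^ ((1:ℝ)/2)) 2,
          ← ENNReal.rpow_natCast ((M t) ^ ((1:ℝ)/2)) 2,
          ← ENNReal.rpow_mul, ← ENNReal.rpow_mul]
        norm_num

/-- Monotonicity of `t ↦ (t - c)/t` in `ℝ≥0∞`. -/
private lemma aux_ratio (c u J : ℝ≥0∞) (huJ : u ≤ J) (hJ : J ≠ ⊤) (hu0 : u ≠ 0) :
    (u - c) / u ≤ (J - c) / J := by
  have hu : u ≠ ⊤ := ne_top_of_le_ne_top hJ huJ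
  have hJ0 : J ≠ 0 := fun h => hu0 (le_antisymm (h ▸ huJ) zero_le)
  rw [ENNReal.div_le_iff hu0 hu, mul_comm, ← mul_div_assoc,
    ENNReal.le_div_iff_mul_le (Or.inl hJ0) (Or.inl hJ)]
  calc (u - c) * J = u * J - c * J := ENNReal.sub_mul (fun _ _ => hJ)
    _ ≤ u * J - c * u := tsub_le_tsub_left (mul_le_mul_right huJ c) _
    _ = u * (J - c) := by rw [mul_comm u (J - c), ENNReal.sub_mul (fun _ _ => hu), mul_comm u J]

/-- The lower bounds converge to `1 / C`. -/
private lemma aux_tendsto (C c : ℝ≥0∞) (hCfin : C ≠ ⊤) (hc : c ≠ ⊤) :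
    Tendsto (fun m : ℕ =>
      ((((m:ℝ≥0∞)+1)) / (c + ((m:ℝ≥0∞)+1))) ^ 2 / (C + ((m:ℝ≥0∞)+1)⁻¹))
      atTop (𝓝 (1 / C)) := by
  have hm1 : Tendsto (fun m : ℕ => (m:ℝ≥0∞) + 1) atTop (𝓝 ⊤) :=
    tendsto_nhds_top_mono ENNReal.tendsto_nat_nhds_top (Eventually.of_forall fun m => le_self_add)
  have hinv : Tendsto (fun m : ℕ => ((m:ℝ≥0∞)+1)⁻¹) atTop (𝓝 0) := by
    simpa using (ENNReal.tendsto_inv_iff.2 hm1)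
  have hr : Tendsto (fun m : ℕ => (((m:ℝ≥0∞)+1)) / (c + ((m:ℝ≥0∞)+1))) atTop (𝓝 1) := by
    have hlow : Tendsto (fun m : ℕ => 1 - c * ((m:ℝ≥0∞)+1)⁻¹) atTop (𝓝 1) := by
      have : Tendsto (fun m : ℕ => c * ((m:ℝ≥0∞)+1)⁻¹) atTop (𝓝 0) := by
        simpa using ENNReal.Tendsto.const_mul hinv (Or.inr hc)
      simpa using (ENNReal.Tendsto.sub tendsto_const_nhds this (Or.inl ENNReal.one_ne_top))
    refine tendsto_of_tendsto_of_tendsto_of_le_of_le hlow tendsto_const_nhds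
      (fun m => ?_) (fun m => ?_)
    · have hm0 : ((m:ℝ≥0∞)+1) ≠ 0 := by simp
      have hmt : ((m:ℝ≥0∞)+1) ≠ ⊤ := by
        simp [ENNReal.add_ne_top]
      have h1 : c * ((m:ℝ≥0∞)+1)⁻¹ = c / ((m:ℝ≥0∞)+1) := rfl
      have h2 : c / (c + ((m:ℝ≥0∞)+1)) ≤ c / ((m:ℝ≥0∞)+1) :=
        ENNReal.div_le_div_left (le_add_self) c
      have h3 : (1:ℝ≥0∞) - c / (c + ((m:ℝ≥0∞)+1)) ≤ ((m:ℝ≥0∞)+1) / (c + ((m:ℝ≥0∞)+1)) := by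
        have hden0 : (c + ((m:ℝ≥0∞)+1)) ≠ 0 := by simp [add_eq_zero]
        have hdent : (c + ((m:ℝ≥0∞)+1)) ≠ ⊤ := ENNReal.add_ne_top.2 ⟨hc, hmt⟩
        have : ((m:ℝ≥0∞)+1) / (c + ((m:ℝ≥0∞)+1))
            = (c + ((m:ℝ≥0∞)+1)) / (c + ((m:ℝ≥0∞)+1)) - c / (c + ((m:ℝ≥0∞)+1)) := by
          rw [← ENNReal.sub_div (fun _ _ => hden0), ENNReal.add_sub_cancel_left hc]
        rw [this, ENNReal.div_self hden0 hdent]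
      rw [h1]
      exact le_trans (tsub_le_tsub_left h2 1) h3
    · rw [ENNReal.div_le_iff (by simp [add_eq_zero] : (c + ((m:ℝ≥0∞)+1)) ≠ 0)
        (ENNReal.add_ne_top.2 ⟨hc, by simp [ENNReal.add_ne_top]⟩), one_mul]
      exact le_add_self
  have hnum : Tendsto (fun m : ℕ => ((((m:ℝ≥0∞)+1)) / (c + ((m:ℝ≥0∞)+1))) ^ 2) atTop (𝓝 1) := by
    have := ENNReal.Tendsto.mul hr (Or.inl one_ne_zero) hr (Or.inl one_ne_zero)
    simpa [sq] using this
  have hden : Tendsto (fun m : ℕ => C + ((m:ℝ≥0∞)+1)⁻¹) atTop (𝓝 C) := by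
    simpa using (tendsto_const_nhds (x := C)).add hinv
  simpa using ENNReal.Tendsto.div hnum (Or.inl one_ne_zero) hden (Or.inl hCfin)

/-- Exhaustion of the integral along the filtration. -/
private lemma aux_sup {H : Type*} [MeasurableSpace H] (ν : Measure H) (g : H → ℝ≥0∞)
    (hg : Measurable g)
    (HT : ℕ → Set H) (hmono : Monotone HT) (hHTmeas : ∀ n, MeasurableSet (HT n))
    (hHTexh : (⋃ n, HT n) = Set.univ) :
    ⨆ T, ∫⁻ a in HT T, g a ∂ν = ∫⁻ a, g a ∂ν := by
  have h1 : ∀ T, ∫⁻ a in HT T, g a ∂ν = ∫⁻ a, (HT T).indicator g a ∂ν :=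
    fun T => (lintegral_indicator (hHTmeas T) g).symm
  simp_rw [h1]
  rw [← lintegral_iSup (fun T => hg.indicator (hHTmeas T))
    (fun T T' h => Set.indicator_le_indicator_of_subset (hmono h) (fun _ => zero_le))]
  refine lintegral_congr fun a => ?_
  have ha : a ∈ ⋃ n, HT n := hHTexh ▸ Set.mem_univ a
  obtain ⟨T, hT⟩ := Set.mem_iUnion.1 ha
  refine le_antisymm (iSup_le fun T' => Set.indicator_le_self _ _ a) ?_
  calc g a = (HT T).indicator g a := (Set.indicator_of_mem hT g).symm
    _ ≤ ⨆ T', (HT T').indicator g a := le_iSup (fun T' => (HT T').indicator g a) T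

/-- Reduce the measure of `{S = ∞}` to the measures of `{k < S}`. -/
private lemma aux_inter {Ω : Type*} [MeasurableSpace Ω] (M : Measure Ω) [IsProbabilityMeasure M]
    (S : Ω → ℝ≥0∞) (hS : Measurable S) (x : ℝ≥0∞)
    (h : ∀ k : ℕ, x ≤ M {ω | (k:ℝ≥0∞) < S ω}) : x ≤ M {ω | S ω = ⊤} := by
  have hset : {ω | S ω = ⊤} = ⋂ k : ℕ, {ω | (k:ℝ≥0∞) < S ω} := by
    ext ω
    simp only [Set.mem_setOf_eq, Set.mem_iInter]
    constructor
    · intro h k; rw [h]; exact ENNReal.coe_lt_top.trans_eq rfl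
    · intro hk
      by_contra hne
      obtain ⟨k, hkk⟩ := ENNReal.exists_nat_gt hne
      exact absurd (hk k) (not_lt.2 hkk.le)
  rw [hset, Directed.measure_iInter
    (fun k => (measurableSet_lt measurable_const hS).nullMeasurableSet)
    (by
      intro i j
      refine ⟨max i j, fun ω hω => ?_, fun ω hω => ?_⟩ <;>
        simp only [Set.mem_setOf_eq] at hω ⊢
      · exact lt_of_le_of_lt (by exact_mod_cast le_max_left i j) hω
      · exact lt_of_le_of_lt (by exact_mod_cast le_max_right i j) hω)
    ⟨0, measure_ne_top M _⟩]
  exact le_iInf h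

/-- Second moment identity. -/
private lemma aux_second {Ω H : Type*} [MeasurableSpace Ω] [MeasurableSpace H]
    (M : Measure Ω) [IsProbabilityMeasure M] (ν : Measure H) [SigmaFinite ν]
    (P : H → Set Ω) (hPa : ∀ a, MeasurableSet (P a))
    (f : H → Ω → ℝ≥0∞) (hf_def : f = fun a ω => (P a).indicator (fun _ => 1) ω)
    (hfm : Measurable (Function.uncurry f))
    (hfa : ∀ ω, Measurable fun a => f a ω)
    (hfω : ∀ a, Measurable fun ω => f a ω)
    (A : Set H) :
    ∫⁻ ω, (∫⁻ a in A, f a ω ∂ν) ^ 2 ∂M = ∫⁻ a in A, ∫⁻ b in A, M (P a ∩ P b) ∂ν ∂ν := by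
  have hSm : Measurable fun ω => ∫⁻ a in A, f a ω ∂ν :=
    Measurable.lintegral_prod_left hfm
  have hmul : ∀ a b ω, f a ω * f b ω = (P a ∩ P b).indicator (fun _ => 1) ω := by
    intro a b ω
    by_cases h1 : ω ∈ P a <;> by_cases h2 : ω ∈ P b <;>
      simp [hf_def, Set.indicator_apply, h1, h2, Set.mem_inter_iff]
  calc ∫⁻ ω, (∫⁻ a in A, f a ω ∂ν) ^ 2 ∂M
      = ∫⁻ ω, ∫⁻ a in A, f a ω * (∫⁻ b in A, f b ω ∂ν) ∂ν ∂M := by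
        refine lintegral_congr fun ω => ?_
        rw [sq, lintegral_mul_const _ (hfa ω)]
    _ = ∫⁻ a in A, ∫⁻ ω, f a ω * (∫⁻ b in A, f b ω ∂ν) ∂M ∂ν := by
        rw [lintegral_lintegral_swap]
        exact ((hfm.comp measurable_swap).mul (hSm.comp measurable_fst)).aemeasurable
    _ = ∫⁻ a in A, ∫⁻ b in A, M (P a ∩ P b) ∂ν ∂ν := by
        refine lintegral_congr fun a => ?_
        calc ∫⁻ ω, f a ω * (∫⁻ b in A, f b ω ∂ν) ∂M
            = ∫⁻ ω, ∫⁻ b in A, f a ω * f b ω ∂ν ∂M := by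
              refine lintegral_congr fun ω => ?_
              rw [lintegral_const_mul _ (hfa ω)]
          _ = ∫⁻ b in A, ∫⁻ ω, f a ω * f b ω ∂M ∂ν := by
              rw [lintegral_lintegral_swap]
              exact (((hfω a).comp measurable_fst).mul (hfm.comp measurable_swap)).aemeasurable
          _ = ∫⁻ b in A, M (P a ∩ P b) ∂ν := by
              refine lintegral_congr fun b => ?_
              simp_rw [hmul a b]
              rw [lintegral_indicator ((hPa a).inter (hPa b)), setLIntegral_one]

/-- **Quantitative Borel–Cantelli lemma (after Aaronson–Sullivan).**
`(Ω, M)` is a Borel probability space, `(H, ν)` a σ-finite parameter space,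
`P a ⊆ Ω` is a jointly measurable family of sets.  If `∫_H M(P a) da = ∞` and the
liminf of the correlation ratios along an exhausting filtration `HT` is `≤ C`,
then the set of `ω` with `∫_H 1_{P a}(ω) da = ∞` has `M`-measure at least `1/C`. -/
theorem stmt_0 {Ω H : Type*} [MeasurableSpace Ω] [MeasurableSpace H]
    (M : Measure Ω) [IsProbabilityMeasure M] (ν : Measure H) [SigmaFinite ν]
    (P : H → Set Ω)
    (hP : MeasurableSet {p : H × Ω | p.2 ∈ P p.1})
    (HT : ℕ → Set H) (hmono : Monotone HT)
    (hHTmeas : ∀ n, MeasurableSet (HT n))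
    (hHTfin : ∀ n, ν (HT n) < ⊤)
    (hHTexh : (⋃ n, HT n) = Set.univ)
    (hdiv : ∫⁻ a, M (P a) ∂ν = ⊤)
    (C : ℝ≥0∞) (hC0 : 0 < C) (hCfin : C < ⊤)
    (hliminf :
      Filter.liminf
        (fun T : ℕ =>
          (∫⁻ a in HT T, ∫⁻ b in HT T, M (P a ∩ P b) ∂ν ∂ν) /
            (∫⁻ a in HT T, M (P a) ∂ν) ^ 2)
        atTop ≤ C) :
    1 / C ≤ M {ω | ∫⁻ a, (P a).indicator (fun _ => (1 : ℝ≥0∞)) ω ∂ν = ⊤} := by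
  classical
  set f : H → Ω → ℝ≥0∞ := fun a ω => (P a).indicator (fun _ => 1) ω with hf_def
  have hfm : Measurable (Function.uncurry f) := by
    have h : Function.uncurry f = ({p : H × Ω | p.2 ∈ P p.1}).indicator (fun _ => 1) := by
      ext ⟨a, ω⟩
      by_cases h : ω ∈ P a <;> simp [Function.uncurry, f, Set.indicator_apply, h]
    rw [h]; exact measurable_const.indicator hP
  have hPa : ∀ a, MeasurableSet (P a) := fun a => measurable_prodMk_left hP
  have hMP : Measurable fun a => M (P a) := measurable_measure_prodMk_left hP
  have hfa : ∀ ω, Measurable fun a => f a ω :=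
    fun ω => hfm.comp (measurable_id.prodMk measurable_const)
  have hfω : ∀ a, Measurable fun ω => f a ω :=
    fun a => hfm.comp (measurable_const.prodMk measurable_id)
  have hind : ∀ a, ∫⁻ ω, f a ω ∂M = M (P a) := by
    intro a
    rw [hf_def, lintegral_indicator (hPa a), setLIntegral_one]
  set S : ℕ → Ω → ℝ≥0∞ := fun T ω => ∫⁻ a in HT T, f a ω ∂ν with hS_def
  set I : ℕ → ℝ≥0∞ := fun T => ∫⁻ a in HT T, M (P a) ∂ν with hI_def
  set Q : ℕ → ℝ≥0∞ := fun T => ∫⁻ a in HT T, ∫⁻ b in HT T, M (P a ∩ P b) ∂ν ∂ν with hQ_def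
  have hliminf' : Filter.liminf (fun T : ℕ => Q T / I T ^ 2) atTop ≤ C := hliminf
  have hSm : ∀ T, Measurable (S T) := fun T => Measurable.lintegral_prod_left hfm
  have hSinfm : Measurable fun ω => ∫⁻ a, f a ω ∂ν := Measurable.lintegral_prod_left hfm
  have hIeq : ∀ T, ∫⁻ ω, S T ω ∂M = I T := by
    intro T
    rw [hS_def, hI_def]
    simp only
    rw [lintegral_lintegral_swap]
    · exact lintegral_congr fun a => hind a
    · exact ((hfm.comp measurable_swap).aemeasurable)
  have hQeq : ∀ T, ∫⁻ ω, (S T ω) ^ 2 ∂M = Q T := fun T =>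
    aux_second M ν P hPa f hf_def hfm hfa hfω (HT T)
  have hIfin : ∀ T, I T ≠ ⊤ := by
    intro T
    refine ne_top_of_le_ne_top (hHTfin T).ne ?_
    calc I T ≤ ∫⁻ _ in HT T, 1 ∂ν := lintegral_mono fun a => prob_le_one
      _ = ν (HT T) := setLIntegral_one _
  have hImono : Monotone I := fun T T' h => lintegral_mono_set (hmono h)
  have hIsup : ⨆ T, I T = ⊤ := by
    rw [hI_def]
    simp only
    rw [aux_sup ν _ hMP HT hmono hHTmeas hHTexh, hdiv]
  -- reduce to the sets {k < S∞}
  refine aux_inter M _ hSinfm (1 / C) ?_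
  intro k
  set x := M {ω | (k:ℝ≥0∞) < ∫⁻ a, f a ω ∂ν} with hx_def
  -- Paley–Zygmund bound for every T
  have hPZ : ∀ T, (I T - (k:ℝ≥0∞)) ^ 2 ≤ Q T * x := by
    intro T
    have base := aux_PZ M (S T) (hSm T) (k:ℝ≥0∞)
    rw [hIeq T, hQeq T] at base
    have hsub : M {ω | (k:ℝ≥0∞) < S T ω} ≤ x := by
      refine measure_mono fun ω hω => ?_
      exact lt_of_lt_of_le hω (setLIntegral_le_lintegral _ _)
    exact base.trans (mul_le_mul_right hsub _)
  -- the quantitative lower bounds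
  have key : ∀ m : ℕ,
      ((((m:ℝ≥0∞)+1)) / ((k:ℝ≥0∞) + ((m:ℝ≥0∞)+1))) ^ 2 / (C + ((m:ℝ≥0∞)+1)⁻¹) ≤ x := by
    intro m
    set δ : ℝ≥0∞ := ((m:ℝ≥0∞)+1)⁻¹ with hδ_def
    set u : ℝ≥0∞ := (k:ℝ≥0∞) + ((m:ℝ≥0∞)+1) with hu_def
    have hδ0 : δ ≠ 0 := by simp [hδ_def, ENNReal.add_ne_top]
    have hu0 : u ≠ 0 := by simp [hu_def, add_eq_zero]
    have huT : u ≠ ⊤ := ENNReal.add_ne_top.2 ⟨ENNReal.natCast_ne_top k, by simp [ENNReal.add_ne_top]⟩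
    have hfreq : ∃ᶠ T in atTop, Q T / I T ^ 2 < C + δ :=
      frequently_lt_of_liminf_lt (by isBoundedDefault) (hliminf'.trans_lt (ENNReal.lt_add_right hCfin.ne hδ0))
    have hev : ∀ᶠ T in atTop, u ≤ I T := by
      have hu_lt : u < ⨆ T, I T := hIsup ▸ huT.lt_top
      obtain ⟨T0, hT0⟩ := lt_iSup_iff.1 hu_lt
      exact eventually_atTop.2 ⟨T0, fun T hT => hT0.le.trans (hImono hT)⟩
    obtain ⟨T, hQT, hIT⟩ := (hfreq.and_eventually hev).exists
    have hITfin : I T ≠ ⊤ := hIfin T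
    have hIT0 : I T ≠ 0 := fun h => hu0 (le_antisymm (h ▸ hIT) zero_le)
    have hQle : Q T ≤ (C + δ) * I T ^ 2 :=
      le_of_lt ((ENNReal.div_lt_iff (Or.inl (pow_ne_zero 2 hIT0))
        (Or.inl (ENNReal.pow_ne_top hITfin))).1 hQT)
    have h1 : (I T - (k:ℝ≥0∞)) ^ 2 ≤ (C + δ) * I T ^ 2 * x :=
      (hPZ T).trans (mul_le_mul_left hQle x)
    have h2 : ((I T - (k:ℝ≥0∞)) / I T) ^ 2 ≤ (C + δ) * x := by
      rw [div_eq_mul_inv, mul_pow, ← ENNReal.inv_pow, ← div_eq_mul_inv,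
        ENNReal.div_le_iff (pow_ne_zero 2 hIT0) (ENNReal.pow_ne_top hITfin)]
      calc (I T - (k:ℝ≥0∞)) ^ 2 ≤ (C + δ) * I T ^ 2 * x := h1
        _ = (C + δ) * x * I T ^ 2 := by ring
    have h3 : (u - (k:ℝ≥0∞)) / u ≤ (I T - (k:ℝ≥0∞)) / I T :=
      aux_ratio (k:ℝ≥0∞) u (I T) hIT hITfin hu0
    have hCδ0 : (C + δ) ≠ 0 := by simp [add_eq_zero, hC0.ne']
    have hCδT : (C + δ) ≠ ⊤ := ENNReal.add_ne_top.2 ⟨hCfin.ne, by simp [hδ_def, ENNReal.add_ne_top]⟩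
    have husub : u - (k:ℝ≥0∞) = (m:ℝ≥0∞)+1 := by
      rw [hu_def, ENNReal.add_sub_cancel_left (ENNReal.natCast_ne_top k)]
    calc ((((m:ℝ≥0∞)+1)) / u) ^ 2 / (C + δ)
        = ((u - (k:ℝ≥0∞)) / u) ^ 2 / (C + δ) := by rw [husub]
      _ ≤ ((I T - (k:ℝ≥0∞)) / I T) ^ 2 / (C + δ) :=
          ENNReal.div_le_div_right (pow_le_pow_left' h3 2) _
      _ ≤ ((C + δ) * x) / (C + δ) := ENNReal.div_le_div_right h2 _
      _ = x := by rw [mul_comm, mul_div_assoc, ENNReal.div_self hCδ0 hCδT, mul_one]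
  exact le_of_tendsto' (aux_tendsto C (k:ℝ≥0∞) hCfin.ne (ENNReal.natCast_ne_top k)) key
end

section
/- Let (b_n : ℝ≥0) be a sequence and Ω a probability space with measurable functions b_n : Ω → ℝ≥0 satisfying ∫ b_n dM = 1 for all n and ∫ b_n² dM → C_∞ with C_∞ ≤ C < ∞. Suppose Ω₀ ⊆ Ω is measurable and b_n(ω) → 0 for all ω ∈ Ω₀ᶜ. Then M(Ω₀) ≥ 1/C_∞ ≥ 1/C. -/
open MeasureTheory Filter
open scoped ENNReal

lemma aux_pointwise (x K : ℝ≥0∞) : x ≤ min x K + x ^ 2 / K := by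
  rcases eq_or_ne x 0 with rfl | hx
  · simp
  rcases le_or_gt x K with h | h
  · simp [min_eq_left h]
  · have hK : K ≠ ⊤ := (h.trans_le le_top).ne
    have : x ≤ x ^ 2 / K := by
      rw [ENNReal.le_div_iff_mul_le (Or.inr (by simpa [pow_eq_zero_iff] using hx))
        (Or.inl hK)]
      calc x * K ≤ x * x := mul_le_mul_right h.le x
      _ = x ^ 2 := (sq x).symm
    exact le_add_left this

/-- **(Key analytic step in the Borel–Cantelli argument.)** If `b n : Ω → ℝ≥0∞` satisfy
`∫ b n = 1`, `∫ (b n)² → C∞ ≤ C < ∞`, and `b n (ω) → 0` for every `ω ∉ Ω₀`, then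
`M(Ω₀) ≥ 1/C∞ ≥ 1/C`. -/
theorem stmt_5 {Ω : Type*} [MeasurableSpace Ω]
    (M : Measure Ω) [IsProbabilityMeasure M]
    (b : ℕ → Ω → ℝ≥0∞) (hbmeas : ∀ n, Measurable (b n))
    (hint : ∀ n, ∫⁻ ω, b n ω ∂M = 1)
    (C Cinf : ℝ≥0∞) (hle : Cinf ≤ C) (hCfin : C < ⊤)
    (htend : Tendsto (fun n => ∫⁻ ω, (b n ω) ^ 2 ∂M) atTop (nhds Cinf))
    (Ω₀ : Set Ω) (hΩ₀ : MeasurableSet Ω₀)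
    (hzero : ∀ ω ∉ Ω₀, Tendsto (fun n => b n ω) atTop (nhds 0)) :
    1 / C ≤ 1 / Cinf ∧ 1 / Cinf ≤ M Ω₀ := by
  have hCne : C ≠ ⊤ := hCfin.ne
  have hCinfne : Cinf ≠ ⊤ := (hle.trans_lt hCfin).ne
  set A := Ω₀ᶜ with hA
  have hAmeas : MeasurableSet A := hΩ₀.compl
  -- Step 1: ∫_A b n → 0
  have hA0 : Tendsto (fun n => ∫⁻ ω in A, b n ω ∂M) atTop (nhds 0) := by
    rw [ENNReal.tendsto_nhds_zero]
    intro ε hε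
    -- reduce to finite ε
    rcases eq_or_ne ε ⊤ with rfl | hεtop
    · filter_upwards with n using le_top
    have hε2 : (0:ℝ≥0∞) < ε / 2 := ENNReal.div_pos hε.ne' (by norm_num)
    set K : ℝ≥0∞ := (C + 1) / (ε / 2) with hK
    have hKtop : K ≠ ⊤ := by
      rw [hK]
      exact (ENNReal.div_lt_top (by simp [hCne]) hε2.ne').ne
    -- truncated part tends to 0
    have htrunc : Tendsto (fun n => ∫⁻ ω in A, min (b n ω) K ∂M) atTop (nhds 0) := by
      have := tendsto_lintegral_of_dominated_convergence (μ := M.restrict A)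
        (F := fun n ω => min (b n ω) K) (f := fun _ => 0) (bound := fun _ => K)
        (fun n => (hbmeas n).min measurable_const)
        (fun n => Filter.Eventually.of_forall fun ω => min_le_right _ _)
        (by rw [lintegral_const]; exact (ENNReal.mul_lt_top hKtop.lt_top (measure_lt_top (M.restrict A) Set.univ)).ne)
        ?_
      · simpa using this
      · refine (ae_restrict_iff' hAmeas).2 (Filter.Eventually.of_forall fun ω hω => ?_)
        have := (hzero ω hω).min (tendsto_const_nhds (x := K))
        simpa using this
    have h1 : ∀ᶠ n in atTop, ∫⁻ ω in A, min (b n ω) K ∂M ≤ ε / 2 :=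
      (ENNReal.tendsto_nhds_zero.mp htrunc) (ε / 2) hε2
    have h2 : ∀ᶠ n in atTop, ∫⁻ ω, (b n ω) ^ 2 ∂M ≤ C + 1 := by
      have : Cinf < C + 1 := lt_of_le_of_lt hle (ENNReal.lt_add_right hCne one_ne_zero)
      exact htend.eventually (eventually_le_nhds this)
    have hKb : (C + 1) / K ≤ ε / 2 := by
      rw [hK]
      exact ENNReal.div_le_of_le_mul
        (le_of_eq (ENNReal.mul_div_cancel hε2.ne'
          (ENNReal.div_lt_top hεtop (by norm_num)).ne).symm)
    filter_upwards [h1, h2] with n hn1 hn2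
    calc ∫⁻ ω in A, b n ω ∂M
        ≤ ∫⁻ ω in A, (min (b n ω) K + (b n ω) ^ 2 / K) ∂M :=
          lintegral_mono fun ω => aux_pointwise _ _
      _ = (∫⁻ ω in A, min (b n ω) K ∂M) + ∫⁻ ω in A, (b n ω) ^ 2 / K ∂M :=
          lintegral_add_right _ (((hbmeas n).pow_const 2).div_const K)
      _ ≤ ε / 2 + (∫⁻ ω, (b n ω) ^ 2 ∂M) / K := by
          refine add_le_add hn1 ?_
          calc ∫⁻ ω in A, (b n ω) ^ 2 / K ∂M
              = (∫⁻ ω in A, (b n ω) ^ 2 ∂M) / K := by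
                simp only [div_eq_mul_inv]
                exact lintegral_mul_const _ ((hbmeas n).pow_const 2)
            _ ≤ (∫⁻ ω, (b n ω) ^ 2 ∂M) / K :=
                ENNReal.div_le_div_right (setLIntegral_le_lintegral _ _) K
      _ ≤ ε / 2 + (C + 1) / K :=
          add_le_add_right (ENNReal.div_le_div_right hn2 K) _
      _ ≤ ε / 2 + ε / 2 := add_le_add_right hKb _
      _ = ε := ENNReal.add_halves ε
  -- Step 2: ∫_{Ω₀} b n → 1
  have hsum : ∀ n, (∫⁻ ω in Ω₀, b n ω ∂M) + ∫⁻ ω in A, b n ω ∂M = 1 := fun n => by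
    rw [hA, lintegral_add_compl _ hΩ₀, hint n]
  have hΩ₀tend : Tendsto (fun n => ∫⁻ ω in Ω₀, b n ω ∂M) atTop (nhds 1) := by
    have heq : ∀ n, ∫⁻ ω in Ω₀, b n ω ∂M = 1 - ∫⁻ ω in A, b n ω ∂M := fun n =>
      ENNReal.eq_sub_of_add_eq (by
        intro h
        have := hsum n
        rw [h] at this
        simp at this) (hsum n)
    simp only [heq]
    have : Tendsto (fun x : ℝ≥0∞ => 1 - x) (nhds 0) (nhds (1 - 0)) :=
      (ENNReal.continuous_sub_left (by norm_num)).tendsto 0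
    simpa [Function.comp_def] using this.comp hA0
  -- Step 3: Cauchy–Schwarz per n
  have hCS : ∀ n, (∫⁻ ω in Ω₀, b n ω ∂M) ^ 2 ≤ M Ω₀ * ∫⁻ ω, (b n ω) ^ 2 ∂M := by
    intro n
    have hpq : Real.HolderConjugate 2 2 := Real.HolderConjugate.two_two
    have h := ENNReal.lintegral_mul_le_Lp_mul_Lq (M.restrict Ω₀) hpq
      (hbmeas n).aemeasurable aemeasurable_const (g := fun _ => 1)
    simp only [mul_one, Pi.mul_apply, ENNReal.one_rpow, lintegral_const,
      Measure.restrict_apply_univ, one_mul] at h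
    have hrw : ∀ ω, b n ω ^ (2:ℝ) = b n ω ^ 2 := fun ω => by
      rw [← ENNReal.rpow_natCast (b n ω) 2]; norm_num
    simp only [hrw] at h
    calc (∫⁻ ω in Ω₀, b n ω ∂M) ^ 2
        ≤ ((∫⁻ ω in Ω₀, (b n ω) ^ 2 ∂M) ^ (1/2:ℝ) * (M Ω₀) ^ (1/2:ℝ)) ^ 2 := by
          gcongr
      _ = (∫⁻ ω in Ω₀, (b n ω) ^ 2 ∂M) * M Ω₀ := by
          rw [mul_pow, ← ENNReal.rpow_natCast (_ ^ (1/2:ℝ)) 2,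
            ← ENNReal.rpow_natCast ((M Ω₀) ^ (1/2:ℝ)) 2,
            ← ENNReal.rpow_mul, ← ENNReal.rpow_mul]
          norm_num
      _ ≤ (∫⁻ ω, (b n ω) ^ 2 ∂M) * M Ω₀ := by
          gcongr
          exact Measure.restrict_le_self
      _ = M Ω₀ * ∫⁻ ω, (b n ω) ^ 2 ∂M := mul_comm _ _
  -- Step 4: take limits
  have hlim : 1 ≤ M Ω₀ * Cinf := by
    have hL : Tendsto (fun n => (∫⁻ ω in Ω₀, b n ω ∂M) ^ 2) atTop (nhds 1) := by
      have := (ENNReal.continuous_pow 2).tendsto (1 : ℝ≥0∞)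
      simpa [Function.comp_def] using this.comp hΩ₀tend
    have hR : Tendsto (fun n => M Ω₀ * ∫⁻ ω, (b n ω) ^ 2 ∂M) atTop (nhds (M Ω₀ * Cinf)) :=
      ENNReal.Tendsto.const_mul htend (Or.inr (measure_ne_top M Ω₀))
    exact le_of_tendsto_of_tendsto' hL hR hCS
  have hCinf0 : Cinf ≠ 0 := by
    intro h
    rw [h, mul_zero] at hlim
    simp at hlim
  constructor
  · simp only [one_div]
    exact ENNReal.inv_le_inv.2 hle
  · rw [ENNReal.div_le_iff_le_mul (Or.inl hCinf0) (Or.inl hCinfne)]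
    exact hlim
end
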